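/- Consider n > 1 prisoners and one room with a single switch starting Off. Suppose each non-leader prisoner turns the switch On the first time they find it Off (and does so at most once), and the leader turns the switch Off whenever he finds it On, counting these events. Then at the moment the leader has turned the switch Off for the (n-1)-st time, every one of the n prisoners has visited the room at least once. -/
import Mathlib


/-- State of the one-room protocol: the switch, which non-leaders have already
signalled, and the leader's count of `On → Off` flips. -/
structure LightState (n : ℕ) where
  light : Bool
  flipped : Fin n → Bool
  count : ℕ

/-- One visit: the leader `L` turns the switch off (counting) whenever it is on;
a non-leader turns it on the first time he finds it off (and only once). -/
def lightStep {n : ℕ} (L : Fin n) (p : Fin n) (s : LightState n) : LightState n :=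
  if p = L then
    if s.light then { s with light := false, count := s.count + 1 } else s
  else
    if s.light = false ∧ s.flipped p = false then
      { s with light := true, flipped := Function.update s.flipped p true }
    else s

/-- Run the protocol along a schedule of visitors; the switch starts Off. -/
def lightRun {n : ℕ} (L : Fin n) (sch : ℕ → Fin n) : ℕ → LightState n
  | 0 => ⟨false, fun _ => false, 0⟩
  | t + 1 => lightStep L (sch t) (lightRun L sch t)

lemma light_inv {n : ℕ} (L : Fin n) (sch : ℕ → Fin n) (t : ℕ) :
    (lightRun L sch t).flipped L = false ∧
    (lightRun L sch t).count + (if (lightRun L sch t).light then 1 else 0)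
      = (Finset.univ.filter (fun p => (lightRun L sch t).flipped p = true)).card ∧
    (∀ p, (lightRun L sch t).flipped p = true → ∃ t' < t, sch t' = p) ∧
    (0 < (lightRun L sch t).count → ∃ t' < t, sch t' = L) := by
  induction t with
  | zero => simp [lightRun]
  | succ t ih =>
    obtain ⟨hL, hcard, hvis, hLvis⟩ := ih
    set s := lightRun L sch t with hs
    have hrun : lightRun L sch (t+1) = lightStep L (sch t) s := rfl
    rw [hrun]; unfold lightStep
    by_cases hp : sch t = L
    · rw [if_pos hp]
      by_cases hl : s.light
      · rw [if_pos hl]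
        refine ⟨hL, ?_, ?_, ?_⟩
        · simpa [hl] using hcard
        · intro p h
          obtain ⟨t', ht', h'⟩ := hvis p h
          exact ⟨t', ht'.trans (Nat.lt_succ_self t), h'⟩
        · intro _; exact ⟨t, Nat.lt_succ_self t, hp⟩
      · rw [if_neg hl]
        refine ⟨hL, hcard, ?_, ?_⟩
        · intro p h
          obtain ⟨t', ht', h'⟩ := hvis p h
          exact ⟨t', ht'.trans (Nat.lt_succ_self t), h'⟩
        · intro h
          obtain ⟨t', ht', h'⟩ := hLvis h
          exact ⟨t', ht'.trans (Nat.lt_succ_self t), h'⟩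
    · rw [if_neg hp]
      by_cases hc : s.light = false ∧ s.flipped (sch t) = false
      · rw [if_pos hc]
        refine ⟨?_, ?_, ?_, ?_⟩
        · show Function.update s.flipped (sch t) true L = false
          rw [Function.update_of_ne (Ne.symm hp)]
          exact hL
        · have hset : (Finset.univ.filter
              (fun p => Function.update s.flipped (sch t) true p = true))
              = insert (sch t) (Finset.univ.filter (fun p => s.flipped p = true)) := by
            ext p
            by_cases hpe : p = sch t <;>
              simp [Function.update, hpe]
          simp only [hset]
          rw [Finset.card_insert_of_notMem (by simp [hc.2])]
          simp only [hc.1] at hcard ⊢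
          simpa using hcard
        · intro p h
          by_cases hpe : p = sch t
          · exact ⟨t, Nat.lt_succ_self t, hpe.symm⟩
          · have : s.flipped p = true := by
              simpa [Function.update, hpe] using h
            obtain ⟨t', ht', h'⟩ := hvis p this
            exact ⟨t', ht'.trans (Nat.lt_succ_self t), h'⟩
        · intro h
          obtain ⟨t', ht', h'⟩ := hLvis h
          exact ⟨t', ht'.trans (Nat.lt_succ_self t), h'⟩
      · rw [if_neg hc]
        refine ⟨hL, hcard, ?_, ?_⟩
        · intro p h
          obtain ⟨t', ht', h'⟩ := hvis p h
          exact ⟨t', ht'.trans (Nat.lt_succ_self t), h'⟩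
        · intro h
          obtain ⟨t', ht', h'⟩ := hLvis h
          exact ⟨t', ht'.trans (Nat.lt_succ_self t), h'⟩

/-- with `n > 1` prisoners, when the leader has turned the switch
off for the `(n-1)`-st time, every prisoner has visited the room. -/
theorem one_room_one_switch_correct (n : ℕ) (hn : 1 < n) (L : Fin n)
    (sch : ℕ → Fin n) (hsch : ∀ p : Fin n, {t | sch t = p}.Infinite)
    (t : ℕ) (hcount : (lightRun L sch t).count = n - 1) :
    ∀ p : Fin n, ∃ t' < t, sch t' = p := by
  obtain ⟨hL, hcard, hvis, hLvis⟩ := light_inv L sch t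
  set s := lightRun L sch t with hs
  have hsub : (Finset.univ.filter (fun p => s.flipped p = true)) ⊆ Finset.univ.erase L := by
    intro p hpmem
    simp only [Finset.mem_filter] at hpmem
    refine Finset.mem_erase.2 ⟨?_, Finset.mem_univ _⟩
    rintro rfl
    rw [hL] at hpmem
    simp at hpmem
  have hcardle : (Finset.univ.filter (fun p => s.flipped p = true)).card ≤ n - 1 := by
    have := Finset.card_le_card hsub
    simpa [Finset.card_erase_of_mem, Fintype.card_fin] using this
  have hlight : (if s.light then 1 else 0) = 0 := by
    rcases Nat.eq_zero_or_pos (if s.light then 1 else 0) with h | h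
    · exact h
    · omega
  have hcard' : (Finset.univ.filter (fun p => s.flipped p = true)).card = n - 1 := by omega
  have heq : (Finset.univ.filter (fun p => s.flipped p = true)) = Finset.univ.erase L := by
    apply Finset.eq_of_subset_of_card_le hsub
    rw [hcard']
    simp [Finset.card_erase_of_mem, Fintype.card_fin]
  intro p
  by_cases hpL : p = L
  · subst hpL
    exact hLvis (by omega)
  · have : p ∈ Finset.univ.filter (fun q => s.flipped q = true) := by
      rw [heq]; exact Finset.mem_erase.2 ⟨hpL, Finset.mem_univ _⟩
    exact hvis p (Finset.mem_filter.1 this).2
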